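/- Suppose r(v) = r̄ for all v ∈ {1,…,V}, where r̄ > 0. Fix b ∈ {1,…,B}. If h(b) + min_{s ∈ S} (c(s) − s·r̄) ≤ 0, then the map v ↦ μ(b,v) is non-increasing on {1,…,V}. -/

import Mathlib

/-- `delta S hS c h r b v` is δ(b,v): δ(b,0) = 0 and
δ(b,v) = h(b) + min_{s ∈ S} (c(s) − s·(r(v) + Σ_{i=0}^{v−1} δ(b,i))). -/
noncomputable def delta (S : Finset ℝ) (hS : S.Nonempty) (c : ℝ → ℝ) (h r : ℕ → ℝ)
    (b : ℕ) : ℕ → ℝ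
  | 0 => 0
  | v + 1 => h b + S.inf' hS (fun s =>
      c s - s * (r (v + 1) + ∑ i ∈ (Finset.range (v + 1)).attach, delta S hS c h r b i.1))
decreasing_by exact Finset.mem_range.mp i.2

/-- `sigma S hS c h r b v` is σ(b,v) = Σ_{i=0}^{v} δ(b,i). -/
noncomputable def sigma (S : Finset ℝ) (hS : S.Nonempty) (c : ℝ → ℝ) (h r : ℕ → ℝ)
    (b v : ℕ) : ℝ :=
  ∑ i ∈ Finset.range (v + 1), delta S hS c h r b i

open Classical

/-- `gmin S hS c x` = the least element of the set of minimizers over s ∈ S of c(s) − s·x. -/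
noncomputable def gmin (S : Finset ℝ) (hS : S.Nonempty) (c : ℝ → ℝ) (x : ℝ) : ℝ :=
  (S.filter (fun s => ∀ s' ∈ S, c s - s * x ≤ c s' - s' * x)).min'
    (by
      obtain ⟨s, hs, hmin⟩ := S.exists_min_image (fun s => c s - s * x) hS
      exact ⟨s, Finset.mem_filter.mpr ⟨hs, fun s' hs' => hmin s' hs'⟩⟩)

/-- μ(b,v) = g(r(v) + σ(b,v−1)). -/
noncomputable def mu (S : Finset ℝ) (hS : S.Nonempty) (c : ℝ → ℝ) (h r : ℕ → ℝ)
    (b v : ℕ) : ℝ :=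
  gmin S hS c (r v + sigma S hS c h r b (v - 1))

/-!
The least minimizer `g x` of `s ↦ c s - s * x` is nondecreasing in `x`, so it suffices to show
that `σ(b, ·)` is nonincreasing on `{0, …, V}`, i.e. that `δ(b, v) ≤ 0` for `1 ≤ v ≤ V`.
For `v = 1` this is the hypothesis. Passing from `v` to `v + 1` shifts the argument of the
minimum by `δ(b, v) ≤ 0`; since every `s ∈ S` is at most `1`, this raises the minimum by at
most `-δ(b, v)`, so `δ(b, v + 1) ≤ δ(b, v) - δ(b, v) = 0`.
-/

open Finset

section Gmin

variable (S : Finset ℝ) (hS : S.Nonempty) (c : ℝ → ℝ)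

lemma gmin_mem_filter (x : ℝ) :
    gmin S hS c x ∈ S.filter (fun s => ∀ s' ∈ S, c s - s * x ≤ c s' - s' * x) :=
  min'_mem _ _

lemma gmin_mem (x : ℝ) : gmin S hS c x ∈ S :=
  (mem_filter.mp (gmin_mem_filter S hS c x)).1

lemma gmin_le_of_mem (x : ℝ) {s : ℝ} (hs : s ∈ S) :
    c (gmin S hS c x) - gmin S hS c x * x ≤ c s - s * x :=
  (mem_filter.mp (gmin_mem_filter S hS c x)).2 s hs

/-- Exchange argument: adding the two minimality inequalities gives
`(g y - g x) * (y - x) ≥ 0`. -/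
lemma gmin_monotone : Monotone (gmin S hS c) := by
  intro x y hxy
  rcases hxy.eq_or_lt with rfl | hlt
  · exact le_rfl
  · have hx := gmin_le_of_mem S hS c x (gmin_mem S hS c y)
    have hy := gmin_le_of_mem S hS c y (gmin_mem S hS c x)
    nlinarith

lemma inf'_sub_mul_add_le {d : ℝ} (hS1 : ∀ s ∈ S, s ≤ 1) (hd : d ≤ 0) (x : ℝ) :
    S.inf' hS (fun s => c s - s * (x + d)) ≤ S.inf' hS (fun s => c s - s * x) - d := by
  rw [le_sub_iff_add_le]
  refine le_inf' _ _ fun s hs => ?_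
  have hsd : -(s * d) ≤ -d := by nlinarith [hS1 s hs]
  calc S.inf' hS (fun s => c s - s * (x + d)) + d
      ≤ c s - s * (x + d) + d := by gcongr; exact inf'_le _ hs
    _ ≤ c s - s * x := by linarith

end Gmin

section Recursion

variable (S : Finset ℝ) (hS : S.Nonempty) (c : ℝ → ℝ) (h r : ℕ → ℝ) (b : ℕ)

lemma delta_succ (v : ℕ) :
    delta S hS c h r b (v + 1)
      = h b + S.inf' hS (fun s => c s - s * (r (v + 1) + sigma S hS c h r b v)) := by
  rw [delta, sum_attach (range (v + 1)) (fun i => delta S hS c h r b i)]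
  rfl

lemma sigma_zero : sigma S hS c h r b 0 = 0 := by
  simp [sigma, delta]

lemma sigma_succ (v : ℕ) :
    sigma S hS c h r b (v + 1) = sigma S hS c h r b v + delta S hS c h r b (v + 1) :=
  sum_range_succ _ _

variable {S c h r b} {V : ℕ} {rbar : ℝ}

lemma delta_nonpos (hS1 : ∀ s ∈ S, s ≤ 1) (hrconst : ∀ v, 1 ≤ v → v ≤ V → r v = rbar)
    (hneg : h b + S.inf' hS (fun s => c s - s * rbar) ≤ 0) :
    ∀ v, v + 1 ≤ V → delta S hS c h r b (v + 1) ≤ 0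
  | 0, hV => by
    rwa [delta_succ, sigma_zero, add_zero, hrconst 1 le_rfl hV]
  | m + 1, hV => by
    have hprev := delta_nonpos hS1 hrconst hneg m (by omega)
    have hshift := inf'_sub_mul_add_le S hS c hS1 hprev (rbar + sigma S hS c h r b m)
    rw [delta_succ, sigma_succ, hrconst (m + 2) (by omega) hV, ← add_assoc]
    rw [delta_succ, hrconst (m + 1) (by omega) (by omega)] at hshift ⊢
    linarith

lemma sigma_antitoneOn (hS1 : ∀ s ∈ S, s ≤ 1) (hrconst : ∀ v, 1 ≤ v → v ≤ V → r v = rbar)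
    (hneg : h b + S.inf' hS (fun s => c s - s * rbar) ≤ 0) :
    AntitoneOn (sigma S hS c h r b) (Set.Iic V) := by
  refine antitoneOn_of_succ_le Set.ordConnected_Iic fun v _ _ hv => ?_
  rw [Order.succ_eq_add_one, sigma_succ]
  linarith [delta_nonpos hS hS1 hrconst hneg v hv]

end Recursion

theorem stmt15_general
    (S : Finset ℝ) (hS : S.Nonempty) (hS01 : ∀ s ∈ S, s ∈ Set.Icc (0 : ℝ) 1)
    (c : ℝ → ℝ)
    (h : ℕ → ℝ)
    (r : ℕ → ℝ)
    (V : ℕ)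
    (rbar : ℝ) (hrconst : ∀ v, 1 ≤ v → v ≤ V → r v = rbar)
    (b : ℕ)
    (hneg : h b + S.inf' hS (fun s => c s - s * rbar) ≤ 0) :
    ∀ v v', 1 ≤ v → v ≤ v' → v' ≤ V →
      mu S hS c h r b v' ≤ mu S hS c h r b v := by
  intro v v' hv hvv' hv'V
  have hsigma : sigma S hS c h r b (v' - 1) ≤ sigma S hS c h r b (v - 1) :=
    sigma_antitoneOn hS (fun s hs => (hS01 s hs).2) hrconst hneg
      (by simp only [Set.mem_Iic]; omega) (by simp only [Set.mem_Iic]; omega) (by omega)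
  unfold mu
  rw [hrconst v hv (by omega), hrconst v' (by omega) hv'V]
  exact gmin_monotone S hS c (by linarith)

/-- Constant reward r(v) = r̄ on {1,…,V}. If h(b) + min_{s∈S}(c(s) − s·r̄) ≤ 0,
then v ↦ μ(b,v) is non-increasing on {1,…,V}. -/
theorem stmt15
    (S : Finset ℝ) (hS : S.Nonempty) (hS01 : ∀ s ∈ S, s ∈ Set.Icc (0 : ℝ) 1)
    (c : ℝ → ℝ) (hc0 : ∀ s ∈ S, 0 ≤ c s)
    (hcmono : ∀ s ∈ S, ∀ s' ∈ S, s ≤ s' → c s ≤ c s')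
    (h : ℕ → ℝ) (hh0 : ∀ b, 0 ≤ h b) (hhmono : Monotone h)
    (r : ℕ → ℝ) (hrmono : Monotone r) (hr0 : r 0 = 0) (hrpos : ∀ v, 1 ≤ v → 0 < r v)
    (B V : ℕ) (hB : 0 < B) (hV : 0 < V)
    (rbar : ℝ) (hrbar : 0 < rbar) (hrconst : ∀ v, 1 ≤ v → v ≤ V → r v = rbar)
    (b : ℕ) (hb1 : 1 ≤ b) (hbB : b ≤ B)
    (hneg : h b + S.inf' hS (fun s => c s - s * rbar) ≤ 0) :
    ∀ v v', 1 ≤ v → v ≤ v' → v' ≤ V →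
      mu S hS c h r b v' ≤ mu S hS c h r b v :=
  stmt15_general S hS hS01 c h r V rbar hrconst b hneg
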